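/- arXiv:math/0301237 — 3 statements merged into one kernel-verified Lean document; each statement's English description precedes it below -/
import Mathlib

section
/- Let ((Ω,ℱ,P),(ℱ_{s,t})_{s≤t}) be a continuous factorization over ℝ and let s ≤ t. Then ℱ_{s,t} = ⋂_{ε>0} ℱ_{s−ε,t+ε} modulo null sets: ℱ_{s,t} ⊆ ℱ_{s−ε,t+ε} for every ε > 0, and every A ∈ ⋂_{ε>0} ℱ_{s−ε,t+ε} satisfies P(A Δ B) = 0 for some B ∈ ℱ_{s,t}. -/
open MeasureTheory ProbabilityTheory Filter Set

noncomputable section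

/-- The space `𝒞` of compact subsets of `ℝ`. -/
def SpectralSpace' : Type := {A : Set ℝ // IsCompact A}

/-- The Borel σ-algebra of the space of compact subsets of `ℝ` (with the topology of the
Hausdorff-type metric described in the paper); it is generated by the sets
`{K | K ∩ U ≠ ∅}` for `U ⊆ ℝ` open. -/
instance : MeasurableSpace SpectralSpace' :=
  MeasurableSpace.generateFrom
    {S : Set SpectralSpace' | ∃ U : Set ℝ, IsOpen U ∧ S = {K : SpectralSpace' | (K.1 ∩ U).Nonempty}}

/-- The open interval in `ℝ` with extended-real endpoints. -/
def erealIoo (a b : EReal) : Set ℝ := {x : ℝ | a < (x : EReal) ∧ (x : EReal) < b}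

/-- An elementary subset of `ℝ`: a finite union of pairwise disjoint open intervals with
endpoints in `ℝ ∪ {−∞, +∞}`. -/
structure Elementary where
  n : ℕ
  a : Fin n → EReal
  b : Fin n → EReal
  disj : ∀ i j : Fin n, i ≠ j → Disjoint (erealIoo (a i) (b i)) (erealIoo (a j) (b j))

/-- The subset of `ℝ` described by an elementary set. -/
def Elementary.set (E : Elementary) : Set ℝ := ⋃ i, erealIoo (E.a i) (E.b i)

/-- A continuous factorization of the probability space `(Ω, m, P)` over `ℝ`:
sub-σ-fields `F s t ⊆ m` for `s ≤ t` such that (a) for `r ≤ s ≤ t`, `F r s` and `F s t`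
are independent and generate `F r t`; (b) for `s < t`, `⋃_{ε>0} F (s+ε) (t-ε)`
generates `F s t`; (c) `⋃ₙ F (-n) n` generates `m`. -/
structure ContinuousFactorization (Ω : Type) {m : MeasurableSpace Ω} (P : Measure Ω) where
  F : ℝ → ℝ → MeasurableSpace Ω
  le_ambient : ∀ s t : ℝ, F s t ≤ m
  indep : ∀ r s t : ℝ, r ≤ s → s ≤ t → ProbabilityTheory.Indep (F r s) (F s t) P
  sup_eq : ∀ r s t : ℝ, r ≤ s → s ≤ t → F r t = F r s ⊔ F s t
  continuity : ∀ s t : ℝ, s < t → F s t = ⨆ (ε : ℝ) (_ : 0 < ε), F (s + ε) (t - ε)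
  ambient_eq : (⨆ n : ℕ, F (-(n : ℝ)) (n : ℝ)) = m

namespace ContinuousFactorization

variable {Ω : Type} {m : MeasurableSpace Ω} {P : Measure Ω}

/-- The sub-σ-field attached to the interval with extended-real endpoints `a`, `b`;
for real `a ≤ b` it coincides with `F a b`, and it realizes `ℱ_{−∞,t}`, `ℱ_{s,∞}`,
`ℱ_{−∞,∞}` for infinite endpoints. -/
def FI (CF : ContinuousFactorization Ω P) (a b : EReal) : MeasurableSpace Ω :=
  ⨆ (s : ℝ) (t : ℝ) (_ : s ≤ t) (_ : a ≤ (s : EReal)) (_ : (t : EReal) ≤ b), CF.F s t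

/-- The sub-σ-field `ℱ_E` attached to an elementary set `E`. -/
def FE (CF : ContinuousFactorization Ω P) (E : Elementary) : MeasurableSpace Ω :=
  ⨆ i, CF.FI (E.a i) (E.b i)

/-- `μ` is the spectral measure of `f`: a finite Borel measure on the space of compact
subsets of `ℝ` with `μ {M | M ⊆ E} = ‖E[f | ℱ_E]‖²` for every elementary set `E`. -/
def IsSpectralMeasure (CF : ContinuousFactorization Ω P) (f : Ω → ℝ)
    (μ : Measure SpectralSpace') : Prop :=
  IsFiniteMeasure μ ∧
    ∀ E : Elementary,
      μ {M : SpectralSpace' | M.1 ⊆ E.set} = ENNReal.ofReal (∫ ω, (P[f|CF.FE E]) ω ^ 2 ∂P)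

end ContinuousFactorization


namespace ContinuousFactorization

variable {Ω : Type} {m : MeasurableSpace Ω} {P : Measure Ω}

lemma F_mono (CF : ContinuousFactorization Ω P) {a b c d : ℝ}
    (hab : a ≤ b) (hbc : b ≤ c) (hcd : c ≤ d) : CF.F b c ≤ CF.F a d := by
  rw [CF.sup_eq a b d hab (hbc.trans hcd), CF.sup_eq b c d hbc hcd]
  exact le_sup_of_le_right le_sup_left

lemma F_reversed_le (CF : ContinuousFactorization Ω P) {x y θ : ℝ} (hyx : y < x) (hθ : 0 < θ) :
    CF.F x y ≤ CF.F ((x + y) / 2 - θ) ((x + y) / 2 + θ) := by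
  have h := CF.continuity ((x + y) / 2 - θ) ((x + y) / 2 + θ) (by linarith)
  have hx' : ((x + y) / 2 - θ) + (x - (x + y) / 2 + θ) = x := by ring
  have hy' : ((x + y) / 2 + θ) - (x - (x + y) / 2 + θ) = y := by ring
  calc CF.F x y
      = CF.F (((x + y) / 2 - θ) + (x - (x + y) / 2 + θ))
          (((x + y) / 2 + θ) - (x - (x + y) / 2 + θ)) := by rw [hx', hy']
    _ ≤ ⨆ (ε : ℝ) (_ : 0 < ε), CF.F (((x + y) / 2 - θ) + ε) (((x + y) / 2 + θ) - ε) :=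
        le_iSup₂_of_le (x - (x + y) / 2 + θ) (by linarith) le_rfl
    _ = _ := h.symm

lemma indep_middle (CF : ContinuousFactorization Ω P) [IsProbabilityMeasure P]
    {a b c d : ℝ} (hab : a ≤ b) (hbc : b ≤ c) (hcd : c ≤ d) :
    Indep (CF.F b c) (CF.F a b ⊔ CF.F c d) P := by
  have h1' := (Indep_iff (CF.F a b) (CF.F b d) P).1 (CF.indep a b d hab (hbc.trans hcd))
  have h2' := (Indep_iff (CF.F b c) (CF.F c d) P).1 (CF.indep b c d hbc hcd)
  have hbc_le_bd : CF.F b c ≤ CF.F b d := by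
    rw [CF.sup_eq b c d hbc hcd]; exact le_sup_left
  have hcd_le_bd : CF.F c d ≤ CF.F b d := by
    rw [CF.sup_eq b c d hbc hcd]; exact le_sup_right
  set p2 : Set (Set Ω) :=
    {u | ∃ D E : Set Ω, MeasurableSet[CF.F a b] D ∧ MeasurableSet[CF.F c d] E ∧ u = D ∩ E}
    with hp2def
  have hgen2 : CF.F a b ⊔ CF.F c d = MeasurableSpace.generateFrom p2 := by
    refine le_antisymm (sup_le ?_ ?_) (MeasurableSpace.generateFrom_le ?_)
    · calc CF.F a b = MeasurableSpace.generateFrom {s | MeasurableSet[CF.F a b] s} :=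
            (@MeasurableSpace.generateFrom_measurableSet Ω (CF.F a b)).symm
        _ ≤ _ := MeasurableSpace.generateFrom_mono (t := p2) fun D hD =>
            ⟨D, Set.univ, hD, MeasurableSet.univ, (Set.inter_univ D).symm⟩
    · calc CF.F c d = MeasurableSpace.generateFrom {s | MeasurableSet[CF.F c d] s} :=
            (@MeasurableSpace.generateFrom_measurableSet Ω (CF.F c d)).symm
        _ ≤ _ := MeasurableSpace.generateFrom_mono (t := p2) fun E hE =>
            ⟨Set.univ, E, MeasurableSet.univ, hE, (Set.univ_inter E).symm⟩
    · rintro u ⟨D, E, hD, hE, rfl⟩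
      exact ((le_sup_left : CF.F a b ≤ CF.F a b ⊔ CF.F c d) D hD).inter
        ((le_sup_right : CF.F c d ≤ CF.F a b ⊔ CF.F c d) E hE)
  refine IndepSets.indep (CF.le_ambient b c)
    (sup_le (CF.le_ambient a b) (CF.le_ambient c d))
    (@MeasurableSpace.isPiSystem_measurableSet Ω (CF.F b c)) ?_
    (@MeasurableSpace.generateFrom_measurableSet Ω (CF.F b c)).symm hgen2 ((IndepSets_iff _ _ _).2 ?_)
  · rintro u ⟨D, E, hD, hE, rfl⟩ u' ⟨D', E', hD', hE', rfl⟩ -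
    exact ⟨D ∩ D', E ∩ E', hD.inter hD', hE.inter hE', by ext x; constructor <;>
      (intro hx; simp only [Set.mem_inter_iff] at hx ⊢; tauto)⟩
  · rintro M u hM ⟨D, E, hD, hE, rfl⟩
    have hME : MeasurableSet[CF.F b d] (M ∩ E) := (hbc_le_bd M hM).inter (hcd_le_bd E hE)
    calc P (M ∩ (D ∩ E)) = P (D ∩ (M ∩ E)) := by rw [Set.inter_left_comm]
      _ = P D * P (M ∩ E) := h1' D (M ∩ E) hD hME
      _ = P D * (P M * P E) := by rw [h2' M E hM hE]
      _ = P M * (P D * P E) := by ring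
      _ = P M * P (D ∩ E) := by rw [h1' D E hD (hcd_le_bd E hE)]

end ContinuousFactorization

/-- Lemma 3.19. In a continuous factorization,
`ℱ_{s,t} = ⋂_{ε>0} ℱ_{s-ε,t+ε}` modulo null sets. -/
theorem statement13 {Ω : Type} [m : MeasurableSpace Ω] (P : Measure Ω) [IsProbabilityMeasure P]
    (CF : ContinuousFactorization Ω P) (s t : ℝ) (hst : s ≤ t) :
    (∀ ε : ℝ, 0 < ε → CF.F s t ≤ CF.F (s - ε) (t + ε)) ∧
    ∀ A : Set Ω, (∀ ε : ℝ, 0 < ε → MeasurableSet[CF.F (s - ε) (t + ε)] A) →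
      ∃ B : Set Ω, MeasurableSet[CF.F s t] B ∧ P (symmDiff A B) = 0 := by
  classical
  have hmst : CF.F s t ≤ m := CF.le_ambient s t
  refine ⟨fun ε hε => CF.F_mono (by linarith) hst (by linarith), ?_⟩
  intro A hA
  set u : ℝ := s - 1 with hu
  set v : ℝ := t + 1 with hv
  have hAuv : MeasurableSet[CF.F u v] A := hA 1 one_pos
  have hAm : MeasurableSet[m] A := CF.le_ambient u v A hAuv
  set δ : ℕ → ℝ := fun n => 1 / ((n : ℝ) + 2) with hδdef
  have hδpos : ∀ n : ℕ, 0 < δ n := fun n => by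
    show (0:ℝ) < 1 / ((n : ℝ) + 2); positivity
  have hδle1 : ∀ n : ℕ, δ n ≤ 1 := fun n => by
    show (1:ℝ) / ((n : ℝ) + 2) ≤ 1
    rw [div_le_one (by positivity)]
    have : (0:ℝ) ≤ (n : ℝ) := Nat.cast_nonneg n
    linarith
  have hδmono : ∀ {n m₁ : ℕ}, n ≤ m₁ → δ m₁ ≤ δ n := by
    intro n m₁ h
    show (1:ℝ) / ((m₁ : ℝ) + 2) ≤ 1 / ((n : ℝ) + 2)
    have : (n:ℝ) ≤ (m₁:ℝ) := Nat.cast_le.2 h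
    apply one_div_le_one_div_of_le (by positivity)
    linarith
  have hδ2 : δ 2 = 1 / 4 := by
    show (1:ℝ) / (((2:ℕ) : ℝ) + 2) = 1 / 4; norm_num
  set K : MeasurableSpace Ω := CF.F u s ⊔ CF.F t v with hK
  set H : MeasurableSpace Ω := MeasurableSpace.generateFrom {A} ⊔ CF.F s t with hH
  set L : MeasurableSpace Ω := CF.F s t ⊔ K with hL
  letI _minst : MeasurableSpace Ω := m
  have hKle : K ≤ m := sup_le (CF.le_ambient u s) (CF.le_ambient t v)
  have hLle : L ≤ m := sup_le hmst hKle
  have hHsub : ∀ ε : ℝ, 0 < ε → H ≤ CF.F (s - ε) (t + ε) := fun ε hε =>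
    sup_le (MeasurableSpace.generateFrom_le fun x hx => by
        rw [Set.mem_singleton_iff] at hx; subst hx; exact hA ε hε)
      (CF.F_mono (by linarith) hst (by linarith))
  have hHle : H ≤ m := sup_le (MeasurableSpace.generateFrom_le fun x hx => by
      rw [Set.mem_singleton_iff] at hx; subst hx; exact hAm) hmst
  have hAH : MeasurableSet[H] A :=
    (le_sup_left : MeasurableSpace.generateFrom {A} ≤ H) A
      (MeasurableSpace.measurableSet_generateFrom rfl)
  -- continuity of the left and right pieces
  have hFus : CF.F u s = ⨆ n : ℕ, CF.F u (s - δ n) := by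
    refine le_antisymm ?_ (iSup_le fun n => CF.F_mono le_rfl
      (by linarith [hδle1 n]) (by linarith [hδpos n]))
    rw [CF.continuity u s (by linarith)]
    refine iSup_le fun ε => iSup_le fun hε => ?_
    by_cases hcase : u + ε ≤ s - ε
    · obtain ⟨n, hn⟩ := exists_nat_one_div_lt hε
      have hδn : δ n ≤ ε := by
        have h1 : δ n ≤ 1 / ((n:ℝ) + 1) := by
          show (1:ℝ) / ((n : ℝ) + 2) ≤ 1 / ((n:ℝ) + 1)
          apply one_div_le_one_div_of_le (by positivity)
          linarith
        linarith
      exact le_iSup_of_le n (CF.F_mono (by linarith) hcase (by linarith))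
    · push_neg at hcase
      have h1 := CF.F_reversed_le hcase (by norm_num : (0:ℝ) < 1/4)
      exact le_iSup_of_le 2 (h1.trans (CF.F_mono (by linarith) (by linarith)
        (by linarith [hδ2])))
  have hFtv : CF.F t v = ⨆ n : ℕ, CF.F (t + δ n) v := by
    refine le_antisymm ?_ (iSup_le fun n => CF.F_mono
      (by linarith [hδpos n]) (by linarith [hδle1 n]) le_rfl)
    rw [CF.continuity t v (by linarith)]
    refine iSup_le fun ε => iSup_le fun hε => ?_
    by_cases hcase : t + ε ≤ v - ε
    · obtain ⟨n, hn⟩ := exists_nat_one_div_lt hε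
      have hδn : δ n ≤ ε := by
        have h1 : δ n ≤ 1 / ((n:ℝ) + 1) := by
          show (1:ℝ) / ((n : ℝ) + 2) ≤ 1 / ((n:ℝ) + 1)
          apply one_div_le_one_div_of_le (by positivity)
          linarith
        linarith
      exact le_iSup_of_le n (CF.F_mono (by linarith) hcase (by linarith))
    · push_neg at hcase
      have h1 := CF.F_reversed_le hcase (by norm_num : (0:ℝ) < 1/4)
      exact le_iSup_of_le 2 (h1.trans (CF.F_mono (by linarith [hδ2]) (by linarith)
        (by linarith)))
  set Kd : ℕ → MeasurableSpace Ω := fun n => CF.F u (s - δ n) ⊔ CF.F (t + δ n) v with hKddef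
  have hKdK : (⨆ n, Kd n) = K := by
    rw [hK, hFus, hFtv, ← iSup_sup_eq]
  have hKdmono : Monotone Kd := by
    intro n m₁ hnm
    exact sup_le_sup
      (CF.F_mono le_rfl (by linarith [hδle1 n]) (by linarith [hδmono hnm]))
      (CF.F_mono (by linarith [hδmono hnm]) (by linarith [hδle1 n]) le_rfl)
  have hHK : Indep H K P := by
    have hind : ∀ n, Indep (Kd n) H P := fun n => by
      have h := CF.indep_middle (a := u) (b := s - δ n) (c := t + δ n) (d := v)
        (by linarith [hδle1 n]) (by linarith [hδpos n]) (by linarith [hδle1 n])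
      exact indep_of_indep_of_le_right h.symm (hHsub (δ n) (hδpos n))
    have h := indep_iSup_of_monotone (μ := P) hind
      (fun n => sup_le (CF.le_ambient _ _) (CF.le_ambient _ _)) hHle hKdmono
    rw [hKdK] at h
    exact h.symm
  have hstK : Indep (CF.F s t) K P := indep_of_indep_of_le_left hHK le_sup_right
  have hFuvL : CF.F u v ≤ L := by
    rw [CF.sup_eq u s v (by linarith) (by linarith), CF.sup_eq s t v hst (by linarith), hL, hK]
    exact le_of_eq (sup_left_comm _ _ _)
  have hAL : MeasurableSet[L] A := hFuvL A hAuv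
  -- conditional expectation
  set f : Ω → ℝ := A.indicator fun _ => (1:ℝ) with hf
  have hfint : Integrable f P := (integrable_const 1).indicator hAm
  set g : Ω → ℝ := P[f|CF.F s t] with hg
  have hgsm : StronglyMeasurable[CF.F s t] g := stronglyMeasurable_condExp
  have hgmeas : Measurable[CF.F s t] g := hgsm.measurable
  have hgint : Integrable g P := integrable_condExp
  set piL : Set (Set Ω) :=
    {C | ∃ D E : Set Ω, MeasurableSet[CF.F s t] D ∧ MeasurableSet[K] E ∧ C = D ∩ E} with hpiL
  have hLgen : L = MeasurableSpace.generateFrom piL := by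
    refine le_antisymm (sup_le ?_ ?_) (MeasurableSpace.generateFrom_le ?_)
    · calc CF.F s t = MeasurableSpace.generateFrom {x | MeasurableSet[CF.F s t] x} :=
            (@MeasurableSpace.generateFrom_measurableSet Ω (CF.F s t)).symm
        _ ≤ _ := MeasurableSpace.generateFrom_mono (t := piL) fun D hD =>
            ⟨D, Set.univ, hD, MeasurableSet.univ, (Set.inter_univ D).symm⟩
    · calc K = MeasurableSpace.generateFrom {x | MeasurableSet[K] x} :=
            (@MeasurableSpace.generateFrom_measurableSet Ω K).symm
        _ ≤ _ := MeasurableSpace.generateFrom_mono (t := piL) fun E hE =>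
            ⟨Set.univ, E, MeasurableSet.univ, hE, (Set.univ_inter E).symm⟩
    · rintro C ⟨D, E, hD, hE, rfl⟩
      exact ((le_sup_left : CF.F s t ≤ L) D hD).inter ((le_sup_right : K ≤ L) E hE)
  have hpiLpi : IsPiSystem piL := by
    rintro C ⟨D, E, hD, hE, rfl⟩ C' ⟨D', E', hD', hE', rfl⟩ -
    exact ⟨D ∩ D', E ∩ E', hD.inter hD', hE.inter hE', by
      ext x; simp only [Set.mem_inter_iff]; tauto⟩
  have hbasic : ∀ D E : Set Ω, MeasurableSet[CF.F s t] D → MeasurableSet[K] E →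
      ∫ x in D ∩ E, g x ∂P = ∫ x in D ∩ E, f x ∂P := by
    intro D E hD hE
    have hD' : MeasurableSet[m] D := hmst D hD
    have hE' : MeasurableSet[m] E := hKle E hE
    have hDgm : Measurable[CF.F s t] (D.indicator g) := hgmeas.indicator hD
    have hEm : Measurable[K] (E.indicator fun _ => (1:ℝ)) := measurable_const.indicator hE
    have hIF : IndepFun (D.indicator g) (E.indicator fun _ => (1:ℝ)) P := by
      rw [IndepFun_iff_Indep]
      exact indep_of_indep_of_le_right (indep_of_indep_of_le_left hstK hDgm.comap_le)
        hEm.comap_le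
    have hmul : ∀ x, (D ∩ E).indicator g x =
        (D.indicator g * E.indicator fun _ => (1:ℝ)) x := by
      intro x
      by_cases hxD : x ∈ D <;> by_cases hxE : x ∈ E <;>
        simp [Set.indicator_apply, hxD, hxE, Set.mem_inter_iff]
    have hintD : Integrable (D.indicator g) P := hgint.indicator hD'
    have hintE : Integrable (E.indicator fun _ => (1:ℝ)) P := (integrable_const 1).indicator hE'
    have hADE : P (A ∩ D ∩ E) = P (A ∩ D) * P E :=
      (Indep_iff H K P).1 hHK (A ∩ D) E
        (hAH.inter ((le_sup_right : CF.F s t ≤ H) D hD)) hE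
    have hfD : ∫ x in D, f x ∂P = (P (A ∩ D)).toReal := by
      rw [hf, setIntegral_indicator hAm, setIntegral_const, smul_eq_mul, mul_one,
        Set.inter_comm, measureReal_def]
    have hset : A ∩ D ∩ E = D ∩ E ∩ A := by
      ext x; simp only [Set.mem_inter_iff]; tauto
    calc ∫ x in D ∩ E, g x ∂P
        = ∫ x, (D ∩ E).indicator g x ∂P := (integral_indicator (hD'.inter hE')).symm
      _ = ∫ x, (D.indicator g * E.indicator fun _ => (1:ℝ)) x ∂P :=
            integral_congr_ae (Filter.Eventually.of_forall hmul)
      _ = (∫ x, D.indicator g x ∂P) * ∫ x, E.indicator (fun _ => (1:ℝ)) x ∂P :=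
            hIF.integral_mul_eq_mul_integral hintD.aestronglyMeasurable hintE.aestronglyMeasurable
      _ = (∫ x in D, g x ∂P) * ∫ x in E, (1:ℝ) ∂P := by
            rw [integral_indicator hD', integral_indicator hE']
      _ = (P (A ∩ D)).toReal * (P E).toReal := by
            rw [hg, setIntegral_condExp hmst hfint hD, hfD, setIntegral_const, smul_eq_mul, mul_one, measureReal_def]
      _ = (P (A ∩ D ∩ E)).toReal := by rw [hADE, ENNReal.toReal_mul]
      _ = ∫ x in D ∩ E, f x ∂P := by
            rw [hf, setIntegral_indicator hAm, setIntegral_const, smul_eq_mul, mul_one, hset, measureReal_def]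
  have key : ∀ ⦃C : Set Ω⦄, MeasurableSet[L] C →
      ∫ x in C, g x ∂P = ∫ x in C, f x ∂P := by
    refine MeasurableSpace.induction_on_inter (m := L) (s := piL) hLgen hpiLpi (by simp) ?_ ?_ ?_
    · rintro C ⟨D, E, hD, hE, rfl⟩
      exact hbasic D E hD hE
    · intro C hC hCeq
      have h1 := integral_add_compl (hLle C hC) hgint
      have h2 := integral_add_compl (hLle C hC) hfint
      have h3 : ∫ x, g x ∂P = ∫ x, f x ∂P := by rw [hg]; exact integral_condExp hmst
      linarith
    · intro q hdisj hqm hq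
      rw [integral_iUnion (fun i => hLle _ (hqm i)) hdisj hgint.integrableOn,
        integral_iUnion (fun i => hLle _ (hqm i)) hdisj hfint.integrableOn]
      exact tsum_congr hq
  have hfLsm : StronglyMeasurable[L] f := by
    rw [hf]; exact StronglyMeasurable.indicator stronglyMeasurable_const hAL
  have hgL : g =ᵐ[P] P[f|L] := by
    refine ae_eq_condExp_of_forall_setIntegral_eq hLle hfint
      (fun C hC _ => hgint.integrableOn) (fun C hC _ => key hC) ?_
    exact StronglyMeasurable.aestronglyMeasurable (hgsm.mono le_sup_left)
  have hcondL : P[f|L] = f := condExp_of_stronglyMeasurable hLle hfLsm hfint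
  rw [hcondL] at hgL
  have hfg : f =ᵐ[P] g := hgL.symm
  refine ⟨g ⁻¹' {1}, hgmeas (measurableSet_singleton 1), ?_⟩
  refine measure_mono_null ?_ (ae_iff.mp hfg)
  intro x hx
  simp only [Set.mem_setOf_eq]
  intro heq
  rw [Set.mem_symmDiff] at hx
  rcases hx with ⟨hxA, hxB⟩ | ⟨hxB, hxA⟩
  · refine hxB ?_
    simp only [Set.mem_preimage, Set.mem_singleton_iff]
    rw [← heq, hf]
    simp [hxA]
  · apply hxA
    have hgx : g x = 1 := by simpa using hxB
    have hfx : f x = 1 := by rw [heq, hgx]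
    by_contra hxA'
    rw [hf] at hfx
    simp [hxA'] at hfx
end
end

section
/- Let X be a compact topological space, 𝒜 an algebra of subsets of X, and μ : 𝒜 → [0,∞) a finitely additive set function satisfying the following regularity condition: for every A ∈ 𝒜 and every ε > 0 there exists B ∈ 𝒜 whose topological closure is contained in A and such that μ(B) ≥ μ(A) − ε. Then μ has one and only one extension to a countably additive measure on the σ-algebra generated by 𝒜. -/
open MeasureTheory Set
open scoped ENNReal

/-- Lemma 3.20. Let `X` be a compact topological space, `𝒜` an algebra
of subsets of `X`, and `μ : 𝒜 → [0,∞)` a finitely additive set function such that for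
every `A ∈ 𝒜` and `ε > 0` there is `B ∈ 𝒜` with `closure B ⊆ A` and `μ B ≥ μ A − ε`.
Then `μ` has one and only one extension to a (countably additive) measure on the
σ-algebra generated by `𝒜`. -/
theorem statement14 {X : Type} [TopologicalSpace X] [CompactSpace X]
    (𝒜 : Set (Set X))
    (hempty : ∅ ∈ 𝒜) (huniv : Set.univ ∈ 𝒜)
    (hunion : ∀ A ∈ 𝒜, ∀ B ∈ 𝒜, A ∪ B ∈ 𝒜)
    (hinter : ∀ A ∈ 𝒜, ∀ B ∈ 𝒜, A ∩ B ∈ 𝒜)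
    (hcompl : ∀ A ∈ 𝒜, Aᶜ ∈ 𝒜)
    (μ : Set X → ℝ) (hnonneg : ∀ A ∈ 𝒜, 0 ≤ μ A)
    (hadd : ∀ A ∈ 𝒜, ∀ B ∈ 𝒜, Disjoint A B → μ (A ∪ B) = μ A + μ B)
    (hreg : ∀ A ∈ 𝒜, ∀ ε : ℝ, 0 < ε → ∃ B ∈ 𝒜, closure B ⊆ A ∧ μ A - ε ≤ μ B) :
    ∃! ν : @Measure X (MeasurableSpace.generateFrom 𝒜),
      ∀ A ∈ 𝒜, ν A = ENNReal.ofReal (μ A) := by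
  classical
  letI ms : MeasurableSpace X := MeasurableSpace.generateFrom 𝒜
  -- basic facts
  have h0 : μ ∅ = 0 := by
    have h := hadd ∅ hempty ∅ hempty (by simp)
    simp only [Set.union_empty] at h
    linarith
  have hdiff : ∀ A ∈ 𝒜, ∀ B ∈ 𝒜, A \ B ∈ 𝒜 := by
    intro A hA B hB
    rw [diff_eq]
    exact hinter A hA _ (hcompl B hB)
  have hmono : ∀ A ∈ 𝒜, ∀ B ∈ 𝒜, A ⊆ B → μ A ≤ μ B := by
    intro A hA B hB hAB
    have hd : (B \ A) ∈ 𝒜 := hdiff B hB A hA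
    have h := hadd A hA _ hd disjoint_sdiff_self_right
    rw [union_diff_cancel hAB] at h
    have h2 := hnonneg _ hd
    linarith
  have hsub2 : ∀ A ∈ 𝒜, ∀ B ∈ 𝒜, μ (A ∪ B) ≤ μ A + μ B := by
    intro A hA B hB
    have hd : (B \ A) ∈ 𝒜 := hdiff B hB A hA
    have h1 := hadd A hA _ hd disjoint_sdiff_self_right
    rw [union_diff_self] at h1
    have h2 := hmono _ hd B hB diff_subset
    linarith
  -- finite subadditivity over a finset
  have hfin : ∀ (t : Finset ℕ) (f : ℕ → Set X), (∀ n, f n ∈ 𝒜) →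
      (⋃ n ∈ t, f n) ∈ 𝒜 ∧ μ (⋃ n ∈ t, f n) ≤ ∑ n ∈ t, μ (f n) := by
    intro t f hf
    induction t using Finset.induction with
    | empty => simp [hempty, h0]
    | @insert a s hnot ih =>
      rw [Finset.set_biUnion_insert, Finset.sum_insert hnot]
      refine ⟨hunion _ (hf a) _ ih.1, ?_⟩
      have := hsub2 _ (hf a) _ ih.1
      linarith [ih.2]
  -- outer approximation by open sets
  have hopen : ∀ C ∈ 𝒜, ∀ ε : ℝ, 0 < ε → ∃ E ∈ 𝒜, ∃ U : Set X,
      IsOpen U ∧ C ⊆ U ∧ U ⊆ E ∧ μ E ≤ μ C + ε := by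
    intro C hC ε hε
    obtain ⟨D, hD, hDc, hDμ⟩ := hreg Cᶜ (hcompl C hC) ε hε
    refine ⟨Dᶜ, hcompl D hD, (closure D)ᶜ, isClosed_closure.isOpen_compl,
      subset_compl_comm.mp hDc, compl_subset_compl.2 subset_closure, ?_⟩
    have h1 := hadd D hD Dᶜ (hcompl D hD) disjoint_compl_right
    rw [union_compl_self] at h1
    have h2 := hadd C hC Cᶜ (hcompl C hC) disjoint_compl_right
    rw [union_compl_self] at h2
    linarith
  -- key compactness estimate
  have key : ∀ A ∈ 𝒜, ∀ f : ℕ → Set X, (∀ n, f n ∈ 𝒜) → A ⊆ ⋃ n, f n →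
      ∀ ε : ℝ, 0 < ε → ∃ t : Finset ℕ, μ A ≤ (∑ n ∈ t, μ (f n)) + 2 * ε := by
    intro A hA f hf hcov ε hε
    obtain ⟨B, hB, hBA, hBμ⟩ := hreg A hA ε hε
    choose E hE U hUopen hfU hUE hEμ using
      fun n => hopen (f n) (hf n) (ε / 2 / 2 ^ n) (by positivity)
    have hKcov : closure B ⊆ ⋃ n, U n := hBA.trans (hcov.trans (iUnion_mono hfU))
    obtain ⟨t, ht⟩ := (isClosed_closure.isCompact).elim_finite_subcover U hUopen hKcov
    have hBsub : B ⊆ ⋃ n ∈ t, E n :=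
      subset_closure.trans (ht.trans (iUnion₂_mono fun n _ => hUE n))
    obtain ⟨hmem, hsum⟩ := hfin t E hE
    have h1 : μ B ≤ ∑ n ∈ t, μ (E n) := (hmono B hB _ hmem hBsub).trans hsum
    have h2 : ∑ n ∈ t, μ (E n) ≤ ∑ n ∈ t, (μ (f n) + ε / 2 / 2 ^ n) :=
      Finset.sum_le_sum fun n _ => hEμ n
    have h3 : ∑ n ∈ t, ε / 2 / 2 ^ n ≤ ε := by
      have h := Summable.sum_le_tsum t (fun n _ => by positivity) (summable_geometric_two' ε)
      rwa [tsum_geometric_two' ε] at h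
    rw [Finset.sum_add_distrib] at h2
    exact ⟨t, by linarith⟩
  -- countable subadditivity in ℝ≥0∞
  have keyE : ∀ A ∈ 𝒜, ∀ f : ℕ → Set X, (∀ n, f n ∈ 𝒜) → A ⊆ ⋃ n, f n →
      ENNReal.ofReal (μ A) ≤ ∑' n, ENNReal.ofReal (μ (f n)) := by
    intro A hA f hf hcov
    refine ENNReal.le_of_forall_pos_le_add fun ε hε _ => ?_
    obtain ⟨t, ht⟩ := key A hA f hf hcov ((ε : ℝ) / 2) (by positivity)
    have ht' : μ A ≤ (∑ n ∈ t, μ (f n)) + (ε : ℝ) := by linarith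
    calc ENNReal.ofReal (μ A) ≤ ENNReal.ofReal ((∑ n ∈ t, μ (f n)) + (ε : ℝ)) :=
          ENNReal.ofReal_le_ofReal ht'
      _ = ENNReal.ofReal (∑ n ∈ t, μ (f n)) + ENNReal.ofReal (ε : ℝ) :=
          ENNReal.ofReal_add (Finset.sum_nonneg fun n _ => hnonneg _ (hf n)) ε.coe_nonneg
      _ ≤ (∑' n, ENNReal.ofReal (μ (f n))) + (ε : ℝ≥0∞) := by
          rw [ENNReal.ofReal_sum_of_nonneg fun n _ => hnonneg _ (hf n),
            ENNReal.ofReal_coe_nnreal]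
          exact add_le_add_left (ENNReal.sum_le_tsum t) _
  -- the outer measure
  set mh : Set X → ℝ≥0∞ := fun s => if s ∈ 𝒜 then ENNReal.ofReal (μ s) else ∞ with hmh
  have hmh0 : mh ∅ = 0 := by simp [hmh, hempty, h0]
  set ν₀ : OuterMeasure X := OuterMeasure.ofFunction mh hmh0 with hν₀
  have hν₀eq : ∀ A ∈ 𝒜, ν₀ A = ENNReal.ofReal (μ A) := by
    intro A hA
    refine le_antisymm ((OuterMeasure.ofFunction_le A).trans (by simp [hmh, hA])) ?_
    rw [hν₀, OuterMeasure.ofFunction_apply]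
    refine le_iInf₂ fun f hcov => ?_
    by_cases hall : ∀ n, f n ∈ 𝒜
    · refine (keyE A hA f hall hcov).trans (ENNReal.tsum_le_tsum fun n => ?_)
      simp [hmh, hall n]
    · push_neg at hall
      obtain ⟨n, hn⟩ := hall
      rw [ENNReal.tsum_eq_top_of_eq_top ⟨n, by simp [hmh, hn]⟩]
      exact le_top
  have hcar : ∀ A ∈ 𝒜, MeasurableSet[ν₀.caratheodory] A := by
    intro A hA
    apply OuterMeasure.ofFunction_caratheodory
    intro t
    by_cases ht : t ∈ 𝒜
    · have h1 : t ∩ A ∈ 𝒜 := hinter t ht A hA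
      have h2 : t \ A ∈ 𝒜 := hdiff t ht A hA
      have hd : Disjoint (t ∩ A) (t \ A) :=
        disjoint_sdiff_self_right.mono_left inter_subset_right
      have hu := hadd _ h1 _ h2 hd
      rw [inter_union_diff] at hu
      simp only [hmh, if_pos ht, if_pos h1, if_pos h2]
      rw [hu, ENNReal.ofReal_add (hnonneg _ h1) (hnonneg _ h2)]
    · simp [hmh, ht]
  have hle : ms ≤ ν₀.caratheodory := MeasurableSpace.generateFrom_le hcar
  set ν : Measure X := ν₀.toMeasure hle with hν
  have hνeq : ∀ A ∈ 𝒜, ν A = ENNReal.ofReal (μ A) := by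
    intro A hA
    rw [hν, toMeasure_apply _ _ (MeasurableSpace.measurableSet_generateFrom hA)]
    exact hν₀eq A hA
  refine ⟨ν, hνeq, ?_⟩
  intro ν' hν'
  haveI hfin' : IsFiniteMeasure ν' :=
    ⟨by rw [hν' univ huniv]; exact ENNReal.ofReal_lt_top⟩
  refine ext_of_generate_finite 𝒜 rfl (fun A hA B hB _ => hinter A hA B hB) ?_ ?_
  · intro s hs
    rw [hν' s hs, hνeq s hs]
  · rw [hν' univ huniv, hνeq univ huniv]
end

section
/- Let X be a set, 𝒜 an algebra of subsets of X, H a Hilbert space, and (H_A)_{A∈𝒜} an orthogonal decomposition of H over 𝒜, i.e. a family of closed subspaces of H with H_X = H such that for all disjoint A, B ∈ 𝒜 the subspaces H_A and H_B are orthogonal and H_{A∪B} = H_A ⊕ H_B. Assume that for every x ∈ H the finitely additive set function A ↦ ‖Proj_{H_A} x‖² on 𝒜 extends to a countably additive measure on the σ-algebra σ(𝒜) generated by 𝒜. Then the orthogonal decomposition extends to a family (H_B)_{B∈σ(𝒜)} of closed subspaces, agreeing with the given one on 𝒜, which is σ-additive: whenever B₁, B₂, … ∈ σ(𝒜) are pairwise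 disjoint, the subspaces H_{B_k} are pairwise orthogonal and H_{B₁∪B₂∪…} equals the closed linear span of ⋃_k H_{B_k}. -/
open MeasureTheory Set
open scoped RealInnerProductSpace ENNReal NNReal

set_option maxHeartbeats 2000000 in
/-- Lemma 3.24. Let `𝒜` be an algebra of subsets of a set `X`, `H` a
Hilbert space, and `(H_A)_{A ∈ 𝒜}` an orthogonal decomposition of `H` over `𝒜` (closed
subspaces, `H_X = H`, and for disjoint `A, B ∈ 𝒜` the subspaces `H_A ⊥ H_B` with
`H_{A∪B} = H_A ⊕ H_B`). If for every `x ∈ H` the additive set function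
`A ↦ ‖Proj_{H_A} x‖²` extends to a countably additive measure on `σ(𝒜)`, then the
decomposition extends to a σ-additive orthogonal decomposition `(H_B)_{B ∈ σ(𝒜)}`:
for pairwise disjoint measurable `B₁, B₂, …` the subspaces are pairwise orthogonal and
`H_{⋃ₖ Bₖ}` is the closed linear span of `⋃ₖ H_{Bₖ}`. -/
theorem statement15 {X : Type} (𝒜 : Set (Set X))
    (hempty : ∅ ∈ 𝒜) (huniv : Set.univ ∈ 𝒜)
    (hunion : ∀ A ∈ 𝒜, ∀ B ∈ 𝒜, A ∪ B ∈ 𝒜)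
    (hinter : ∀ A ∈ 𝒜, ∀ B ∈ 𝒜, A ∩ B ∈ 𝒜)
    (hcompl : ∀ A ∈ 𝒜, Aᶜ ∈ 𝒜)
    {H : Type} [NormedAddCommGroup H] [InnerProductSpace ℝ H] [CompleteSpace H]
    (h : Set X → Submodule ℝ H)
    (hclosed : ∀ A ∈ 𝒜, IsClosed ((h A : Set H)))
    (htop : h Set.univ = ⊤)
    (horth : ∀ A ∈ 𝒜, ∀ B ∈ 𝒜, Disjoint A B →
      ∀ x ∈ h A, ∀ y ∈ h B, ⟪x, y⟫ = 0)
    (hsum : ∀ A ∈ 𝒜, ∀ B ∈ 𝒜, Disjoint A B → h (A ∪ B) = h A ⊔ h B)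
    (hext : ∀ x : H, ∃ μ : @Measure X (MeasurableSpace.generateFrom 𝒜),
      ∀ A ∈ 𝒜, ∀ y ∈ h A, (∀ z ∈ h A, ⟪x - y, z⟫ = 0) →
        μ A = ENNReal.ofReal (‖y‖ ^ 2)) :
    ∃ h' : Set X → Submodule ℝ H,
      (∀ A ∈ 𝒜, h' A = h A) ∧
      (∀ B : Set X, MeasurableSet[MeasurableSpace.generateFrom 𝒜] B →
        IsClosed ((h' B : Set H))) ∧
      (∀ B : ℕ → Set X,
        (∀ k, MeasurableSet[MeasurableSpace.generateFrom 𝒜] (B k)) →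
        (∀ i j, i ≠ j → Disjoint (B i) (B j)) →
        (∀ i j, i ≠ j → ∀ x ∈ h' (B i), ∀ y ∈ h' (B j), ⟪x, y⟫ = 0) ∧
        h' (⋃ k, B k) = (⨆ k, h' (B k)).topologicalClosure) := by
  classical
  letI m : MeasurableSpace X := MeasurableSpace.generateFrom 𝒜
  choose μ hμ using hext
  have hπ : IsPiSystem 𝒜 := fun s hs t ht _ => hinter s hs t ht
  have hdecomp : ∀ A ∈ 𝒜, ∀ x : H, ∃ y ∈ h A, ∃ z ∈ h Aᶜ, x = y + z := by
    intro A hA x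
    have h1 : h (A ∪ Aᶜ) = h A ⊔ h Aᶜ := hsum A hA Aᶜ (hcompl A hA) disjoint_compl_right
    rw [union_compl_self, htop] at h1
    have hx : x ∈ h A ⊔ h Aᶜ := h1 ▸ Submodule.mem_top
    obtain ⟨y, hy, z, hz, hyz⟩ := Submodule.mem_sup.1 hx
    exact ⟨y, hy, z, hz, hyz.symm⟩
  have hval : ∀ A ∈ 𝒜, ∀ x y z : H, y ∈ h A → z ∈ h Aᶜ → x = y + z →
      μ x A = ENNReal.ofReal (‖y‖ ^ 2) := by
    intro A hA x y z hy hz hxyz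
    refine hμ x A hA y hy fun w hw => ?_
    have hxy : x - y = z := by rw [hxyz]; abel
    rw [hxy]
    exact horth Aᶜ (hcompl A hA) A hA disjoint_compl_left z hz w hw
  have huv : ∀ x : H, μ x univ = ENNReal.ofReal (‖x‖ ^ 2) := by
    intro x
    exact hval univ huniv x x 0 (htop ▸ Submodule.mem_top) ((h univᶜ).zero_mem) (by simp)
  have hfin : ∀ x : H, IsFiniteMeasure (μ x) := fun x =>
    ⟨by rw [huv x]; exact ENNReal.ofReal_lt_top⟩
  have hne : ∀ (x : H) (B : Set X), μ x B ≠ ⊤ := fun x B =>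
    (lt_of_le_of_lt (measure_mono (subset_univ B)) (by rw [huv x]; exact ENNReal.ofReal_lt_top)).ne
  have hExt : ∀ ν₁ ν₂ : @Measure X m, IsFiniteMeasure ν₁ →
      (∀ A ∈ 𝒜, ν₁ A = ν₂ A) → ν₁ = ν₂ := by
    intro ν₁ ν₂ i1 hagree
    haveI := i1
    exact ext_of_generate_finite 𝒜 rfl hπ hagree (hagree univ huniv)

  set μr : H → Set X → ℝ := fun x B => (μ x B).toReal with hμr_def
  have hμr_nonneg : ∀ (x : H) (B : Set X), 0 ≤ μr x B := fun x B => ENNReal.toReal_nonneg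
  have hμr_mono : ∀ (x : H) {B C : Set X}, B ⊆ C → μr x B ≤ μr x C := fun x B C hBC =>
    ENNReal.toReal_mono (hne x C) (measure_mono hBC)
  have hμr_univ : ∀ x : H, μr x univ = ‖x‖ ^ 2 := by
    intro x; simp only [hμr_def, huv x, ENNReal.toReal_ofReal (sq_nonneg _)]
  have hbound : ∀ (x : H) (B : Set X), μr x B ≤ ‖x‖ ^ 2 := fun x B =>
    (hμr_mono x (subset_univ B)).trans (hμr_univ x).le
  have hμrval : ∀ A ∈ 𝒜, ∀ x y z : H, y ∈ h A → z ∈ h Aᶜ → x = y + z →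
      μr x A = ‖y‖ ^ 2 := by
    intro A hA x y z hy hz hxyz
    simp only [hμr_def, hval A hA x y z hy hz hxyz, ENNReal.toReal_ofReal (sq_nonneg _)]
  have hμr_add : ∀ (x : H) {B C : Set X}, MeasurableSet[m] B → MeasurableSet[m] C →
      Disjoint B C → μr x (B ∪ C) = μr x B + μr x C := by
    intro x B C hB hC hBC
    simp only [hμr_def, measure_union hBC hC, ENNReal.toReal_add (hne x B) (hne x C)]
  have hμr_subadd : ∀ (x : H) (B C : Set X), μr x (B ∪ C) ≤ μr x B + μr x C := by
    intro x B C
    calc (μ x (B ∪ C)).toReal ≤ (μ x B + μ x C).toReal :=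
          ENNReal.toReal_mono (by simp [ENNReal.add_ne_top, hne]) (measure_union_le B C)
      _ = μr x B + μr x C := ENNReal.toReal_add (hne x B) (hne x C)
  have hneg : ∀ x : H, μ (-x) = μ x := by
    intro x
    refine hExt _ _ (hfin _) fun A hA => ?_
    obtain ⟨y, hy, z, hz, hxyz⟩ := hdecomp A hA x
    rw [hval A hA x y z hy hz hxyz,
      hval A hA (-x) (-y) (-z) (neg_mem hy) (neg_mem hz) (by rw [hxyz]; abel), norm_neg]
  have hμr_neg : ∀ (x : H) (B : Set X), μr (-x) B = μr x B := by
    intro x B; simp only [hμr_def, hneg x]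
  have hpar : ∀ x y : H, ∀ B : Set X,
      μr (x + y) B + μr (x - y) B = 2 * μr x B + 2 * μr y B := by
    intro x y B
    have key : μ (x + y) + μ (x - y) = (μ x + μ x) + (μ y + μ y) := by
      haveI := hfin (x + y); haveI := hfin (x - y)
      refine hExt _ _ (by infer_instance) fun A hA => ?_
      obtain ⟨a, ha, a', ha', hx⟩ := hdecomp A hA x
      obtain ⟨b, hb, b', hb', hy⟩ := hdecomp A hA y
      simp only [Measure.add_apply]
      rw [hval A hA (x + y) (a + b) (a' + b') (add_mem ha hb) (add_mem ha' hb')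
          (by rw [hx, hy]; abel),
        hval A hA (x - y) (a - b) (a' - b') (sub_mem ha hb) (sub_mem ha' hb')
          (by rw [hx, hy]; abel),
        hval A hA x a a' ha ha' hx, hval A hA y b b' hb hb' hy,
        ← ENNReal.ofReal_add (sq_nonneg _) (sq_nonneg _),
        ← ENNReal.ofReal_add (sq_nonneg _) (sq_nonneg _),
        ← ENNReal.ofReal_add (by positivity) (by positivity)]
      rw [← ENNReal.ofReal_add (by positivity) (by positivity)]
      exact congrArg ENNReal.ofReal (by nlinarith [norm_add_sq_real a b, norm_sub_sq_real a b])
    have e : μ (x + y) B + μ (x - y) B = μ x B + μ x B + (μ y B + μ y B) := by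
      simpa [Measure.add_apply] using congrArg (fun ν : @Measure X m => ν B) key
    have e2 := congrArg ENNReal.toReal e
    rw [ENNReal.toReal_add (hne _ _) (hne _ _),
      ENNReal.toReal_add (ENNReal.add_ne_top.2 ⟨hne _ _, hne _ _⟩)
        (ENNReal.add_ne_top.2 ⟨hne _ _, hne _ _⟩),
      ENNReal.toReal_add (hne _ _) (hne _ _), ENNReal.toReal_add (hne _ _) (hne _ _)] at e2
    simp only [hμr_def]
    linarith [e2]

  set νr : H → H → Set X → ℝ := fun x y B => (μr (x + y) B - μr (x - y) B) / 4 with hνr_def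
  have hexp : ∀ (x y : H) (B : Set X),
      μr (x + y) B = μr x B + μr y B + 2 * νr x y B := by
    intro x y B
    have := hpar x y B
    simp only [hνr_def]
    linarith
  have hq : ∀ t : ℝ, 0 ≤ t → ∀ x y : H,
      μ (t • x + y) + Real.toNNReal (t / 2) • μ (x - y) =
      Real.toNNReal (t * t) • μ x + (μ y + Real.toNNReal (t / 2) • μ (x + y)) := by
    intro t ht x y
    haveI := hfin (t • x + y); haveI := hfin (x - y)
    haveI := hfin x; haveI := hfin y; haveI := hfin (x + y)
    refine hExt _ _ (by infer_instance) fun A hA => ?_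
    obtain ⟨a, ha, a', ha', hx⟩ := hdecomp A hA x
    obtain ⟨b, hb, b', hb', hy⟩ := hdecomp A hA y
    simp only [Measure.add_apply, Measure.smul_apply, ENNReal.smul_def, smul_eq_mul]
    rw [hval A hA (t • x + y) (t • a + b) (t • a' + b')
        (add_mem (Submodule.smul_mem _ t ha) hb) (add_mem (Submodule.smul_mem _ t ha') hb')
        (by rw [hx, hy, smul_add]; abel),
      hval A hA (x - y) (a - b) (a' - b') (sub_mem ha hb) (sub_mem ha' hb')
        (by rw [hx, hy]; abel),
      hval A hA x a a' ha ha' hx, hval A hA y b b' hb hb' hy,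
      hval A hA (x + y) (a + b) (a' + b') (add_mem ha hb) (add_mem ha' hb')
        (by rw [hx, hy]; abel)]
    have c1 : (Real.toNNReal (t / 2) : ℝ≥0∞) = ENNReal.ofReal (t / 2) := rfl
    have c2 : (Real.toNNReal (t * t) : ℝ≥0∞) = ENNReal.ofReal (t * t) := rfl
    rw [c1, c2, ← ENNReal.ofReal_mul (by positivity), ← ENNReal.ofReal_mul (by positivity),
      ← ENNReal.ofReal_mul (by positivity), ← ENNReal.ofReal_add (by positivity) (by positivity),
      ← ENNReal.ofReal_add (by positivity) (by positivity),
      ← ENNReal.ofReal_add (by positivity) (by positivity)]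
    refine congrArg ENNReal.ofReal ?_
    have e1 := norm_add_sq_real (t • a) b
    have e2 := norm_sub_sq_real a b
    have e3 := norm_add_sq_real a b
    have e4 : ‖t • a‖ ^ 2 = t ^ 2 * ‖a‖ ^ 2 := by
      rw [norm_smul]; simp [mul_pow, sq_abs]
    have e5 : ⟪t • a, b⟫ = t * ⟪a, b⟫ := real_inner_smul_left a b t
    rw [e5] at e1
    nlinarith [e1, e2, e3, e4]
  have hqr : ∀ (t : ℝ) (x y : H) (B : Set X),
      μr (t • x + y) B = t * t * μr x B + 2 * t * νr x y B + μr y B := by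
    have key : ∀ t : ℝ, 0 ≤ t → ∀ (x y : H) (B : Set X),
        μr (t • x + y) B = t * t * μr x B + 2 * t * νr x y B + μr y B := by
      intro t ht x y B
      have e : μ (t • x + y) B + Real.toNNReal (t / 2) • μ (x - y) B =
          Real.toNNReal (t * t) • μ x B + (μ y B + Real.toNNReal (t / 2) • μ (x + y) B) := by
        simpa [Measure.add_apply, Measure.smul_apply] using
          congrArg (fun ν : @Measure X m => ν B) (hq t ht x y)
      have e2 := congrArg ENNReal.toReal e
      have hmulne : ∀ (c : ℝ≥0) (z : H) (C : Set X), (c • μ z C) ≠ ⊤ := by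
        intro c z C
        simp only [ENNReal.smul_def, smul_eq_mul]
        exact ENNReal.mul_ne_top ENNReal.coe_ne_top (hne z C)
      rw [ENNReal.toReal_add (hne _ _) (hmulne _ _ _),
        ENNReal.toReal_add (hmulne _ _ _) (ENNReal.add_ne_top.2 ⟨hne _ _, hmulne _ _ _⟩),
        ENNReal.toReal_add (hne _ _) (hmulne _ _ _)] at e2
      simp only [ENNReal.smul_def, smul_eq_mul, ENNReal.toReal_mul, ENNReal.coe_toReal,
        Real.coe_toNNReal _ (by positivity : (0:ℝ) ≤ t / 2),
        Real.coe_toNNReal _ (by positivity : (0:ℝ) ≤ t * t)] at e2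
      simp only [hνr_def, hμr_def] at *
      linarith [e2]
    intro t x y B
    rcases le_or_gt 0 t with ht | ht
    · exact key t ht x y B
    · have hs : (0:ℝ) ≤ -t := by linarith
      have e0 : μr (t • x + y) B = μr ((-t) • x + -y) B := by
        have : -(t • x + y) = (-t) • x + -y := by
          rw [neg_smul]; abel
        rw [← hμr_neg (t • x + y) B, this]
      have e1 := key (-t) hs x (-y) B
      have e2 : νr x (-y) B = - νr x y B := by
        simp only [hνr_def, sub_neg_eq_add, ← sub_eq_add_neg]
        ring
      have e3 : μr (-y) B = μr y B := hμr_neg y B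
      rw [e0, e1, e2, e3]
      ring
  have hCS : ∀ (x y : H) (B : Set X), (νr x y B) ^ 2 ≤ μr x B * μr y B := by
    intro x y B
    have hd : discrim (μr x B) (2 * νr x y B) (μr y B) ≤ 0 := by
      refine discrim_le_zero fun t => ?_
      have := hqr t x y B
      nlinarith [hμr_nonneg (t • x + y) B]
    rw [discrim] at hd
    nlinarith [hd]
  have hzero : ∀ (x y : H) (B : Set X), μr y B = 0 → μr (x + y) B = μr x B := by
    intro x y B h0
    have hcs := hCS x y B
    have hν : νr x y B = 0 := by nlinarith [sq_nonneg (νr x y B), hμr_nonneg x B]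
    have := hexp x y B
    rw [h0, hν] at this
    linarith
  have hdiff : ∀ (x y : H) (B : Set X), μr y B = 0 → μr x B ≤ ‖x - y‖ ^ 2 := by
    intro x y B h0
    have e : μr x B = μr ((x - y) + y) B := by rw [sub_add_cancel]
    rw [e, hzero (x - y) y B h0]
    exact hbound (x - y) B

  have hμr0 : ∀ B : Set X, μr 0 B = 0 := by
    intro B
    have := hbound (0:H) B
    have := hμr_nonneg (0:H) B
    simp only [norm_zero] at *
    nlinarith
  set h' : Set X → Submodule ℝ H := fun B =>
    { carrier := {x : H | μr x Bᶜ = 0}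
      add_mem' := by
        intro a b hab hbb
        simp only [Set.mem_setOf_eq] at *
        rw [hzero a b Bᶜ hbb, hab]
      zero_mem' := by simp only [Set.mem_setOf_eq, hμr0]
      smul_mem' := by
        intro c x hx
        simp only [Set.mem_setOf_eq] at *
        have := hqr c x 0 Bᶜ
        have hν : νr x 0 Bᶜ = 0 := by
          have hcs := hCS x 0 Bᶜ
          rw [hμr0] at hcs
          nlinarith [sq_nonneg (νr x 0 Bᶜ), hμr_nonneg x Bᶜ]
        simp only [add_zero, hμr0, hν, hx] at this
        simpa using this } with hh'_def
  have hmem : ∀ (B : Set X) (x : H), x ∈ h' B ↔ μr x Bᶜ = 0 := fun B x => Iff.rfl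
  have hmono : ∀ {B C : Set X}, B ⊆ C → h' B ≤ h' C := by
    intro B C hBC x hx
    rw [hmem] at *
    have h1 : μr x Cᶜ ≤ μr x Bᶜ := hμr_mono x (compl_subset_compl.2 hBC)
    have h2 := hμr_nonneg x Cᶜ
    linarith
  have hclosed' : ∀ B : Set X, IsClosed ((h' B : Set H)) := by
    intro B
    rw [← closure_subset_iff_isClosed]
    intro x hx
    rw [SetLike.mem_coe, hmem]
    have hle : ∀ ε : ℝ, 0 < ε → μr x Bᶜ ≤ ε := by
      intro ε hε
      obtain ⟨y, hy, hxy⟩ := Metric.mem_closure_iff.1 hx (Real.sqrt ε) (Real.sqrt_pos.2 hε)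
      rw [SetLike.mem_coe, hmem] at hy
      have h1 := hdiff x y Bᶜ hy
      have h2 : ‖x - y‖ ^ 2 < ε := by
        have : dist x y = ‖x - y‖ := dist_eq_norm x y
        nlinarith [Real.sq_sqrt hε.le, Real.sqrt_nonneg ε, norm_nonneg (x - y), hxy]
      linarith
    have := hμr_nonneg x Bᶜ
    by_contra hne0
    have hpos : 0 < μr x Bᶜ := lt_of_le_of_ne this (Ne.symm hne0)
    linarith [hle (μr x Bᶜ / 2) (by linarith)]
  have hagree : ∀ A ∈ 𝒜, h' A = h A := by
    intro A hA
    ext x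
    rw [hmem]
    constructor
    · intro hx
      obtain ⟨y, hy, z, hz, hxyz⟩ := hdecomp A hA x
      have hy' : y ∈ h Aᶜᶜ := by rw [compl_compl]; exact hy
      have hz0 : μr x Aᶜ = ‖z‖ ^ 2 :=
        hμrval Aᶜ (hcompl A hA) x z y hz hy' (by rw [hxyz]; abel)
      have : z = 0 := by
        rw [hz0] at hx
        have := norm_nonneg z
        have : ‖z‖ = 0 := by nlinarith
        exact norm_eq_zero.1 this
      rw [hxyz, this, add_zero]
      exact hy
    · intro hx
      have : μr x Aᶜ = ‖(0:H)‖ ^ 2 := by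
        refine hμrval Aᶜ (hcompl A hA) x 0 x (Submodule.zero_mem _) ?_ (by abel)
        rw [compl_compl]; exact hx
      simpa using this

  have hν0 : ∀ (x y : H) (B : Set X), μr x B = 0 ∨ μr y B = 0 → νr x y B = 0 := by
    intro x y B hor
    have hcs := hCS x y B
    rcases hor with h0 | h0 <;>
      [rw [h0, zero_mul] at hcs; rw [h0, mul_zero] at hcs] <;>
      nlinarith [sq_nonneg (νr x y B)]
  have hinnerν : ∀ x y : H, ⟪x, y⟫ = νr x y univ := by
    intro x y
    simp only [hνr_def, hμr_univ]
    nlinarith [norm_add_sq_real x y, norm_sub_sq_real x y]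
  have horth' : ∀ B C : Set X, MeasurableSet[m] B → Disjoint B C →
      ∀ x ∈ h' B, ∀ y ∈ h' C, ⟪x, y⟫ = 0 := by
    intro B C hB hBC x hx y hy
    rw [hmem] at hx hy
    have hsplit : νr x y univ = νr x y B + νr x y Bᶜ := by
      have e1 : μr (x + y) univ = μr (x + y) B + μr (x + y) Bᶜ := by
        rw [← hμr_add (x + y) hB hB.compl disjoint_compl_right, union_compl_self]
      have e2 : μr (x - y) univ = μr (x - y) B + μr (x - y) Bᶜ := by
        rw [← hμr_add (x - y) hB hB.compl disjoint_compl_right, union_compl_self]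
      simp only [hνr_def]
      rw [e1, e2]; ring
    have hyB : μr y B = 0 := by
      have h1 : μr y B ≤ μr y Cᶜ := hμr_mono y (fun p hp => Set.disjoint_left.1 hBC hp)
      have h2 := hμr_nonneg y B
      rw [hy] at h1; linarith
    rw [hinnerν, hsplit, hν0 x y B (Or.inr hyB), hν0 x y Bᶜ (Or.inl hx), add_zero]
  -- decomposability predicate
  set Dc : Set X → Prop := fun B => ∀ x : H, ∃ u ∈ h' B, ∃ v ∈ h' Bᶜ, x = u + v with hDc_def
  have hcast : ∀ B : Set X, h' Bᶜᶜ = h' B := fun B => congrArg h' (compl_compl B)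
  have hμr_empty : ∀ x : H, μr x ∅ = 0 := by
    intro x; simp only [hμr_def, measure_empty, ENNReal.toReal_zero]
  have hDempty : Dc ∅ := by
    intro x
    refine ⟨0, Submodule.zero_mem _, x, ?_, by rw [zero_add]⟩
    rw [hmem, compl_compl]
    exact hμr_empty x

  have hDbasic : ∀ A ∈ 𝒜, Dc A := by
    intro A hA x
    obtain ⟨y, hy, z, hz, hxyz⟩ := hdecomp A hA x
    exact ⟨y, by rw [hagree A hA]; exact hy, z,
      by rw [hagree Aᶜ (hcompl A hA)]; exact hz, hxyz⟩
  have hDcompl : ∀ B : Set X, Dc B → Dc Bᶜ := by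
    intro B hB x
    obtain ⟨u, hu, v, hv, hx⟩ := hB x
    exact ⟨v, hv, u, by rw [hcast B]; exact hu, by rw [hx]; abel⟩
  have hpair : ∀ C D : Set X, Disjoint C D → Dc C → Dc D → Dc (C ∪ D) := by
    intro C D hCD hC hDd x
    obtain ⟨u1, hu1, v, hv, hx1⟩ := hC x
    obtain ⟨u2, hu2, w, hw, hv2⟩ := hDd v
    refine ⟨u1 + u2,
      add_mem (hmono subset_union_left hu1) (hmono subset_union_right hu2),
      w, ?_, by rw [hx1, hv2]; abel⟩
    rw [hmem, compl_compl]
    have hwD : μr w D = 0 := by have := (hmem _ _).1 hw; rwa [compl_compl] at this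
    have hvC : μr v C = 0 := by have := (hmem _ _).1 hv; rwa [compl_compl] at this
    have hu2C : μr u2 C = 0 := by
      have h1 : μr u2 C ≤ μr u2 Dᶜ := hμr_mono u2 (fun p hp => Set.disjoint_left.1 hCD hp)
      have h2 := (hmem _ _).1 hu2
      have h3 := hμr_nonneg u2 C
      linarith
    have hwC : μr w C = 0 := by
      have hwe : w = v + -u2 := by rw [hv2]; abel
      rw [hwe, hzero v (-u2) C (by rw [hμr_neg]; exact hu2C)]
      exact hvC
    have h4 := hμr_subadd w C D
    have h5 := hμr_nonneg w (C ∪ D)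
    linarith
  -- partial unions
  set Sb : (ℕ → Set X) → ℕ → Set X := fun f n => ⋃ i, ⋃ _ : i < n, f i with hSb_def
  have hSb0 : ∀ f : ℕ → Set X, Sb f 0 = ∅ := by
    intro f; simp [hSb_def]
  have hSbsucc : ∀ (f : ℕ → Set X) (n : ℕ), Sb f (n + 1) = Sb f n ∪ f n := by
    intro f n
    simp only [hSb_def]
    ext p
    simp only [mem_iUnion, mem_union, Nat.lt_succ_iff_lt_or_eq]
    constructor
    · rintro ⟨i, hi | rfl, hp⟩
      · exact Or.inl ⟨i, hi, hp⟩
      · exact Or.inr hp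
    · rintro (⟨i, hi, hp⟩ | hp)
      · exact ⟨i, Or.inl hi, hp⟩
      · exact ⟨n, Or.inr rfl, hp⟩
  have hSbmono : ∀ f : ℕ → Set X, Monotone (Sb f) := by
    intro f a b hab p hp
    simp only [hSb_def, mem_iUnion] at hp ⊢
    obtain ⟨i, hi, hpi⟩ := hp
    exact ⟨i, lt_of_lt_of_le hi hab, hpi⟩
  have hSbmeas : ∀ f : ℕ → Set X, (∀ i, MeasurableSet[m] (f i)) →
      ∀ n, MeasurableSet[m] (Sb f n) := fun f hf n =>
    MeasurableSet.iUnion fun i => MeasurableSet.iUnion fun _ => hf i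
  have hSbdisj : ∀ f : ℕ → Set X, (∀ i j, i ≠ j → Disjoint (f i) (f j)) →
      ∀ n j, n ≤ j → Disjoint (Sb f n) (f j) := by
    intro f hfd n j hnj
    simp only [hSb_def, Set.disjoint_iUnion_left]
    intro i hi
    exact hfd i j (by omega)
  have hSbsub : ∀ (f : ℕ → Set X) (n : ℕ), Sb f n ⊆ ⋃ i, f i := by
    intro f n p hp
    simp only [hSb_def, mem_iUnion] at hp
    obtain ⟨i, _, hpi⟩ := hp
    exact mem_iUnion.2 ⟨i, hpi⟩
  have hSbU : ∀ f : ℕ → Set X, (⋃ n, Sb f n) = ⋃ i, f i := by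
    intro f
    refine subset_antisymm (iUnion_subset fun n => hSbsub f n) (iUnion_subset fun i p hp => ?_)
    refine mem_iUnion.2 ⟨i + 1, ?_⟩
    simp only [hSb_def, mem_iUnion]
    exact ⟨i, Nat.lt_succ_self i, hp⟩

  have hlim : ∀ f : ℕ → Set X, (∀ i, MeasurableSet[m] (f i)) →
      (∀ n, Dc (Sb f n)) → ∀ x : H, ∃ u : ℕ → H, (∀ n, u n ∈ h' (Sb f n)) ∧
      ∃ ul : H, Filter.Tendsto u Filter.atTop (nhds ul) ∧ ul ∈ h' (⋃ i, f i) ∧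
        x - ul ∈ h' ((⋃ i, f i)ᶜ) := by
    intro f hfm hdc x
    choose u hu v hv hxn using fun n => hdc n x
    set r : ℕ → ℝ := fun n => μr x (Sb f n) with hr_def
    have hvS : ∀ n, μr (v n) (Sb f n) = 0 := fun n => by
      have := (hmem _ _).1 (hv n); rwa [compl_compl] at this
    have huS : ∀ n, μr (u n) (Sb f n)ᶜ = 0 := fun n => (hmem _ _).1 (hu n)
    have hnorm : ∀ n, ‖u n‖ ^ 2 = r n := by
      intro n
      have e1 : μr x (Sb f n) = μr (u n) (Sb f n) := by
        rw [hxn n]; exact hzero (u n) (v n) _ (hvS n)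
      have e2 : μr (u n) univ = μr (u n) (Sb f n) + μr (u n) (Sb f n)ᶜ := by
        rw [← hμr_add _ (hSbmeas f hfm n) (hSbmeas f hfm n).compl disjoint_compl_right,
          union_compl_self]
      rw [hμr_univ, huS n] at e2
      simp only [hr_def]
      linarith
    have hinner : ∀ p q : ℕ, p ≤ q → ⟪u q, u p⟫ = ‖u p‖ ^ 2 := by
      intro p q hpq
      have hsub : Sb f p ⊆ Sb f q := hSbmono f hpq
      have o1 : ⟪v q, u p⟫ = 0 :=
        horth' (Sb f q)ᶜ (Sb f p) (hSbmeas f hfm q).compl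
          (disjoint_compl_left.mono_right hsub) (v q) (hv q) (u p) (hu p)
      have o2 : ⟪v p, u p⟫ = 0 :=
        horth' (Sb f p)ᶜ (Sb f p) (hSbmeas f hfm p).compl
          disjoint_compl_left (v p) (hv p) (u p) (hu p)
      have e1 : ⟪u q + v q, u p⟫ = ⟪u p + v p, u p⟫ := by rw [← hxn q, ← hxn p]
      rw [inner_add_left, inner_add_left, o1, o2, real_inner_self_eq_norm_sq] at e1
      linarith
    have hdist : ∀ p q : ℕ, p ≤ q → ‖u q - u p‖ ^ 2 = r q - r p := by
      intro p q hpq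
      have e := norm_sub_sq_real (u q) (u p)
      rw [hinner p q hpq] at e
      rw [e, hnorm q, hnorm p]; ring
    have hrmono : Monotone r := fun a b hab => hμr_mono x (hSbmono f hab)
    have hrC : CauchySeq r := by
      refine Filter.Tendsto.cauchySeq (x := ⨆ n, r n) ?_
      refine tendsto_atTop_ciSup hrmono ⟨‖x‖ ^ 2, ?_⟩
      rintro _ ⟨n, rfl⟩
      exact hbound x _
    have huC : CauchySeq u := by
      rw [Metric.cauchySeq_iff] at hrC ⊢
      intro ε hε
      obtain ⟨N, hN⟩ := hrC (ε ^ 2) (by positivity)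
      have key : ∀ p q : ℕ, N ≤ p → N ≤ q → p ≤ q → dist (u q) (u p) < ε := by
        intro p q hp hq hpq
        have h1 := hdist p q hpq
        have h2 := hN q hq p hp
        rw [Real.dist_eq] at h2
        have h3 : r q - r p < ε ^ 2 := lt_of_le_of_lt (le_abs_self _) h2
        rw [dist_eq_norm]
        nlinarith [norm_nonneg (u q - u p)]
      refine ⟨N, fun a ha b hb => ?_⟩
      rcases le_total a b with hab | hab
      · rw [dist_comm]; exact key a b ha hb hab
      · exact key b a hb ha hab
    obtain ⟨ul, hul⟩ := cauchySeq_tendsto_of_complete huC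
    refine ⟨u, hu, ul, hul, ?_, ?_⟩
    · exact (hclosed' _).mem_of_tendsto hul
        (Filter.Eventually.of_forall fun n => hmono (hSbsub f n) (hu n))
    · rw [hmem, compl_compl]
      have hvw : Filter.Tendsto (fun n => x - u n) Filter.atTop (nhds (x - ul)) :=
        tendsto_const_nhds.sub hul
      have hwn : ∀ n, μr (x - ul) (Sb f n) = 0 := by
        intro n
        have hle : ∀ q, n ≤ q → μr (x - ul) (Sb f n) ≤ ‖(x - ul) - (x - u q)‖ ^ 2 := by
          intro q hq
          refine hdiff (x - ul) (x - u q) _ ?_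
          have he : x - u q = v q := by rw [hxn q]; abel
          rw [he]
          have h1 := hμr_mono (v q) (hSbmono f hq)
          have h2 := hμr_nonneg (v q) (Sb f n)
          linarith [hvS q]
        have htend : Filter.Tendsto (fun q => ‖(x - ul) - (x - u q)‖ ^ 2)
            Filter.atTop (nhds 0) := by
          have h1 : Filter.Tendsto (fun q => (x - ul) - (x - u q)) Filter.atTop
              (nhds ((x - ul) - (x - ul))) := tendsto_const_nhds.sub hvw
          rw [sub_self] at h1
          have h2 := h1.norm
          rw [norm_zero] at h2
          simpa using h2.pow 2
        have hle0 : μr (x - ul) (Sb f n) ≤ 0 :=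
          ge_of_tendsto htend (Filter.eventually_atTop.2 ⟨n, hle⟩)
        linarith [hμr_nonneg (x - ul) (Sb f n)]
      have hten : Filter.Tendsto (fun n => μ (x - ul) (Sb f n)) Filter.atTop
          (nhds (μ (x - ul) (⋃ n, Sb f n))) := tendsto_measure_iUnion_atTop (hSbmono f)
      have hzero' : ∀ n, μ (x - ul) (Sb f n) = 0 := by
        intro n
        have h1 := hwn n
        simp only [hμr_def] at h1
        rcases (ENNReal.toReal_eq_zero_iff _).1 h1 with h2 | h2
        · exact h2
        · exact absurd h2 (hne _ _)
      rw [show (fun n => μ (x - ul) (Sb f n)) = fun _ => (0 : ℝ≥0∞) from funext hzero'] at hten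
      have hfinal := tendsto_nhds_unique hten tendsto_const_nhds
      rw [hSbU f] at hfinal
      simp only [hμr_def, hfinal, ENNReal.toReal_zero]

  have hD : ∀ ⦃B : Set X⦄, MeasurableSet[m] B → Dc B := by
    refine MeasurableSpace.induction_on_inter (C := fun B _ => Dc B) (s := 𝒜) rfl hπ hDempty hDbasic
      (fun t _ ht => hDcompl t ht) ?_
    intro f hfd hfm hfc
    have hdc : ∀ n, Dc (Sb f n) := by
      intro n
      induction n with
      | zero => rw [hSb0]; exact hDempty
      | succ k ih =>
        rw [hSbsucc]
        exact hpair _ _ (hSbdisj f (fun i j hij => hfd hij) k k le_rfl) ih (hfc k)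
    intro x
    obtain ⟨u, hu, ul, hul, h1, h2⟩ := hlim f hfm hdc x
    exact ⟨ul, h1, x - ul, h2, by abel⟩
  have hsplitle : ∀ C D : Set X, MeasurableSet[m] C → ∀ x ∈ h' (C ∪ D),
      x ∈ h' C ⊔ h' D := by
    intro C D hC x hx
    obtain ⟨uu, huu, vv, hvv, hxx⟩ := hD hC x
    have hvC : μr vv C = 0 := by have := (hmem _ _).1 hvv; rwa [compl_compl] at this
    have hxm : μr x (C ∪ D)ᶜ = 0 := (hmem _ _).1 hx
    have hum : μr uu Cᶜ = 0 := (hmem _ _).1 huu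
    have hvU : μr vv (C ∪ D)ᶜ = 0 := by
      have he : vv = x + -uu := by rw [hxx]; abel
      have hmu : μr (-uu) (C ∪ D)ᶜ = 0 := by
        rw [hμr_neg]
        have h1 : μr uu (C ∪ D)ᶜ ≤ μr uu Cᶜ :=
          hμr_mono uu (compl_subset_compl.2 subset_union_left)
        have h2 := hμr_nonneg uu (C ∪ D)ᶜ
        linarith
      rw [he, hzero x (-uu) _ hmu]
      exact hxm
    have hvD : vv ∈ h' D := by
      rw [hmem]
      have hsub : Dᶜ ⊆ C ∪ (C ∪ D)ᶜ := by
        intro p hp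
        by_cases hpC : p ∈ C
        · exact Or.inl hpC
        · exact Or.inr (fun hmemCD => hmemCD.elim hpC hp)
      have h1 : μr vv Dᶜ ≤ μr vv (C ∪ (C ∪ D)ᶜ) := hμr_mono vv hsub
      have h2 := hμr_subadd vv C (C ∪ D)ᶜ
      have h3 := hμr_nonneg vv Dᶜ
      rw [hvC, hvU] at h2
      linarith
    exact Submodule.mem_sup.2 ⟨uu, huu, vv, hvD, hxx.symm⟩
  have hSble : ∀ f : ℕ → Set X, (∀ i, MeasurableSet[m] (f i)) →
      ∀ n, h' (Sb f n) ≤ ⨆ k, h' (f k) := by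
    intro f hfm n
    induction n with
    | zero =>
      rw [hSb0]
      intro x hx
      have h1 := (hmem _ _).1 hx
      rw [compl_empty, hμr_univ] at h1
      have : x = 0 := by
        have := norm_nonneg x
        have hn : ‖x‖ = 0 := by nlinarith
        exact norm_eq_zero.1 hn
      rw [this]
      exact Submodule.zero_mem _
    | succ k ih =>
      rw [hSbsucc]
      intro x hx
      have := hsplitle (Sb f k) (f k) (hSbmeas f hfm k) x hx
      exact (sup_le ih (le_iSup (fun k => h' (f k)) k)) this
  refine ⟨h', hagree, fun B _ => hclosed' B, ?_⟩
  intro B hBm hBd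
  constructor
  · intro i j hij x hx y hy
    exact horth' (B i) (B j) (hBm i) (hBd i j hij) x hx y hy
  · refine le_antisymm ?_ ?_
    · intro x hx
      obtain ⟨u, hu, ul, hul, h1, h2⟩ := hlim B hBm (fun n => hD (hSbmeas B hBm n)) x
      have hw : x - ul ∈ h' (⋃ k, B k) := sub_mem hx h1
      have hz : ⟪x - ul, x - ul⟫ = 0 :=
        horth' (⋃ k, B k) (⋃ k, B k)ᶜ (MeasurableSet.iUnion hBm)
          disjoint_compl_right _ hw _ h2
      have hxul : x = ul := by
        have := inner_self_eq_zero.1 hz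
        rwa [sub_eq_zero] at this
      show x ∈ closure ((⨆ k, h' (B k) : Submodule ℝ H) : Set H)
      rw [hxul]
      exact mem_closure_of_tendsto hul
        (Filter.Eventually.of_forall fun n => hSble B hBm n (hu n))
    · exact Submodule.topologicalClosure_minimal _
        (iSup_le fun k => hmono (subset_iUnion B k)) (hclosed' (⋃ k, B k))
end
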